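/- arXiv:2309.03296 — 5 statements merged into one kernel-verified Lean document; each statement's English description precedes it below -/
import Mathlib

section
/- (Theorem B, attracting case.) Let Ω ⊆ ℂ be open, f : ℂ → ℂ analytic on Ω with f(Ω) ⊆ Ω, let p ≥ 1 and a ∈ Ω satisfy f^{∘p}(a) = a, and suppose the multiplier λ := (f^{∘p})'(a) satisfies 0 < |λ| < 1. Let μ ∈ ℂ with μ^p = λ, and let Φ : ℂ → ℂ be analytic on Ω with Φ(f(z)) = μ·Φ(z) for all z ∈ Ω (Schröder equation) and Φ'(f^{∘j}(a)) ≠ 0 for every 0 ≤ j < p. Assume Ω is the basin of the cycle: for every z ∈ Ω there is 0 ≤ j < p with f^{∘(pn+j)}(z) → a as n → ∞. Then for every integer t ≥ 2 and every compact set K ⊆ Ω on which Φ' has no zeros, there exist C > 0 and N ∈ ℕ such that for all n ≥ N and all z ∈ K one has (f^{∘n})'(z) ≠ 0 and | (f^{∘n})^{(t)}(z) / (f^{∘n})'(z) − Φ^{(t)}(z) / Φ'(z) | ≤ C · |λ|^{n/p}. -/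
/-!
Differentiating the Schröder relation `Φ ∘ f^[n] = μ ^ n • Φ` twice gives
`(f^[n])'' / (f^[n])' - Φ'' / Φ' = -μ ^ n Φ'(z) Φ''(f^[n] z) / Φ'(f^[n] z) ^ 2`.
A small closed ball around `a` is mapped into itself by `f^[p]`, so by compactness the orbits of
points of `K` eventually stay in a fixed compact neighbourhood of the cycle where `Φ' ≠ 0`;
hence the difference above is `O(|μ| ^ n)` uniformly on compact sets. The ratios
`R_s h = h^(s) / h'` satisfy `R_{s+1} = R_s' + R_s R_2`, so the error of order `s + 1` is
bounded by the error of order `s`, its derivative (a Cauchy estimate on a slightly larger compact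
set) and the error of order `2`; induction on `s` concludes, with `|μ| ^ n = |λ| ^ (n / p)`.
-/

open Filter Topology Set Metric

protected theorem DifferentiableOn.iteratedDeriv {E : Type*} [NormedAddCommGroup E]
    [NormedSpace ℂ E] [CompleteSpace E] {s : Set ℂ} {h : ℂ → E}
    (hh : DifferentiableOn ℂ h s) (hs : IsOpen s) (k : ℕ) :
    DifferentiableOn ℂ (iteratedDeriv k h) s := by
  induction k with
  | zero => simpa using hh
  | succ k ih => simpa only [iteratedDeriv_succ] using ih.deriv hs

noncomputable def derivRatio (s : ℕ) (h : ℂ → ℂ) (z : ℂ) : ℂ :=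
  iteratedDeriv s h z / deriv h z

section DerivRatio

variable {U : Set ℂ} {h : ℂ → ℂ}

theorem differentiableOn_derivRatio (hU : IsOpen U) (hh : DifferentiableOn ℂ h U)
    (h' : ∀ z ∈ U, deriv h z ≠ 0) (s : ℕ) : DifferentiableOn ℂ (derivRatio s h) U :=
  (hh.iteratedDeriv hU s).div (hh.deriv hU) h'

theorem derivRatio_succ (hU : IsOpen U) (hh : DifferentiableOn ℂ h U) {z : ℂ} (hz : z ∈ U)
    (h' : deriv h z ≠ 0) (s : ℕ) :
    derivRatio (s + 1) h z = deriv (derivRatio s h) z + derivRatio s h z * derivRatio 2 h z := by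
  have hdiv : deriv (derivRatio s h) z = (iteratedDeriv (s + 1) h z * deriv h z -
      iteratedDeriv s h z * iteratedDeriv 2 h z) / deriv h z ^ 2 := by
    rw [iteratedDeriv_succ, iteratedDeriv_succ, iteratedDeriv_one]
    exact deriv_div ((hh.iteratedDeriv hU s).differentiableAt (hU.mem_nhds hz))
      ((hh.deriv hU).differentiableAt (hU.mem_nhds hz)) h'
  simp only [derivRatio, hdiv]
  field_simp
  ring

theorem derivRatio_succ_sub {g : ℂ → ℂ} (hU : IsOpen U) (hg : DifferentiableOn ℂ g U)
    (hh : DifferentiableOn ℂ h U) (hg' : ∀ z ∈ U, deriv g z ≠ 0) (hh' : ∀ z ∈ U, deriv h z ≠ 0)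
    {z : ℂ} (hz : z ∈ U) (s : ℕ) :
    derivRatio (s + 1) g z - derivRatio (s + 1) h z =
      deriv (fun w => derivRatio s g w - derivRatio s h w) z +
        (derivRatio s g z - derivRatio s h z) * derivRatio 2 g z +
        derivRatio s h z * (derivRatio 2 g z - derivRatio 2 h z) := by
  rw [derivRatio_succ hU hg hz (hg' z hz), derivRatio_succ hU hh hz (hh' z hz),
    deriv_fun_sub ((differentiableOn_derivRatio hU hg hg' s).differentiableAt (hU.mem_nhds hz))
      ((differentiableOn_derivRatio hU hh hh' s).differentiableAt (hU.mem_nhds hz))]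
  ring

end DerivRatio

theorem norm_deriv_le_of_forall_mem_closedBall_norm_le {E : Type*} [NormedAddCommGroup E]
    [NormedSpace ℂ E] [CompleteSpace E] {U : Set ℂ} {f : ℂ → E} (hU : IsOpen U)
    (hf : DifferentiableOn ℂ f U) {z : ℂ} {r M : ℝ} (hr : 0 < r) (hzr : closedBall z r ⊆ U)
    (hM : ∀ w ∈ closedBall z r, ‖f w‖ ≤ M) : ‖deriv f z‖ ≤ M / r := by
  rw [← Complex.cderiv_eq_deriv hU hf hr hzr]
  exact Complex.norm_cderiv_le hr fun w hw => hM w (sphere_subset_closedBall hw)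

theorem exists_eventually_norm_derivRatio_sub_le {ι : Type*} {l : Filter ι} {U : Set ℂ}
    (hU : IsOpen U) {g : ι → ℂ → ℂ} {φ : ℂ → ℂ} {ε : ι → ℝ}
    (hg : ∀ i, DifferentiableOn ℂ (g i) U) (hg' : ∀ i, ∀ z ∈ U, deriv (g i) z ≠ 0)
    (hφ : DifferentiableOn ℂ φ U) (hφ' : ∀ z ∈ U, deriv φ z ≠ 0)
    (hε₀ : ∀ i, 0 ≤ ε i) (hε₁ : ∀ i, ε i ≤ 1)
    (htwo : ∀ K ⊆ U, IsCompact K → ∃ C, ∀ᶠ i in l, ∀ z ∈ K,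
      ‖derivRatio 2 (g i) z - derivRatio 2 φ z‖ ≤ C * ε i)
    {s : ℕ} (hs : 2 ≤ s) {K : Set ℂ} (hKU : K ⊆ U) (hK : IsCompact K) :
    ∃ C, ∀ᶠ i in l, ∀ z ∈ K, ‖derivRatio s (g i) z - derivRatio s φ z‖ ≤ C * ε i := by
  induction s, hs using Nat.le_induction generalizing K with
  | base => exact htwo K hKU hK
  | succ s hs ih =>
    obtain ⟨δ, hδ, hKδ⟩ := hK.exists_cthickening_subset_open hU hKU
    obtain ⟨Cs, hCs⟩ := ih hKδ hK.cthickening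
    obtain ⟨C₂, hC₂⟩ := htwo K hKU hK
    obtain ⟨B₂, hB₂⟩ := hK.exists_bound_of_continuousOn
      ((differentiableOn_derivRatio hU hφ hφ' 2).continuousOn.mono hKU)
    obtain ⟨Bs, hBs⟩ := hK.exists_bound_of_continuousOn
      ((differentiableOn_derivRatio hU hφ hφ' s).continuousOn.mono hKU)
    refine ⟨Cs / δ + Cs * (B₂ + |C₂|) + Bs * C₂, ?_⟩
    filter_upwards [hCs, hC₂] with i hCsi hC₂i z hz
    have hball : closedBall z δ ⊆ cthickening δ K := closedBall_subset_cthickening hz δ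
    have hderiv : ‖deriv (fun w => derivRatio s (g i) w - derivRatio s φ w) z‖ ≤ Cs * ε i / δ :=
      norm_deriv_le_of_forall_mem_closedBall_norm_le hU
        ((differentiableOn_derivRatio hU (hg i) (hg' i) s).sub
          (differentiableOn_derivRatio hU hφ hφ' s)) hδ (hball.trans hKδ)
        fun w hw => hCsi w (hball hw)
    have hDs := hCsi z (self_subset_cthickening K hz)
    have hD₂ := hC₂i z hz
    have hR₂ : ‖derivRatio 2 (g i) z‖ ≤ B₂ + |C₂| :=
      (norm_le_norm_add_norm_sub' _ (derivRatio 2 φ z)).trans (add_le_add (hB₂ z hz)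
        (by nlinarith [le_abs_self C₂, abs_nonneg C₂, hε₀ i, hε₁ i]))
    rw [derivRatio_succ_sub hU (hg i) hφ (hg' i) hφ' (hKU hz)]
    calc _ ≤ ‖deriv (fun w => derivRatio s (g i) w - derivRatio s φ w) z‖ +
          ‖derivRatio s (g i) z - derivRatio s φ z‖ * ‖derivRatio 2 (g i) z‖ +
          ‖derivRatio s φ z‖ * ‖derivRatio 2 (g i) z - derivRatio 2 φ z‖ :=
          norm_add₃_le.trans_eq (by rw [norm_mul, norm_mul])
      _ ≤ Cs * ε i / δ + Cs * ε i * (B₂ + |C₂|) + Bs * (C₂ * ε i) := by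
          gcongr
          · exact (norm_nonneg _).trans hDs
          · exact (norm_nonneg _).trans (hBs z hz)
          · exact hBs z hz
      _ = (Cs / δ + Cs * (B₂ + |C₂|) + Bs * C₂) * ε i := by ring

theorem apply_iterate_eq_pow_mul {α M : Type*} [Monoid M] {s : Set α} {f : α → α} {Φ : α → M}
    {μ : M} (hf : MapsTo f s s) (hΦ : ∀ x ∈ s, Φ (f x) = μ * Φ x) (n : ℕ) :
    ∀ x ∈ s, Φ (f^[n] x) = μ ^ n * Φ x := by
  induction n with
  | zero => simp
  | succ n ih =>
    intro x hx
    rw [Function.iterate_succ_apply', hΦ _ (hf.iterate n hx), ih x hx, pow_succ', mul_assoc]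

section FunctionalEquation

variable {Ω : Set ℂ} {g Φ : ℂ → ℂ} {c : ℂ}

theorem deriv_comp_mul_deriv_of_comp_eq_mul (hΩ : IsOpen Ω) (hg : DifferentiableOn ℂ g Ω)
    (hΦ : DifferentiableOn ℂ Φ Ω) (hgΩ : MapsTo g Ω Ω) (hcomp : ∀ w ∈ Ω, Φ (g w) = c * Φ w)
    {z : ℂ} (hz : z ∈ Ω) : deriv Φ (g z) * deriv g z = c * deriv Φ z := by
  have hconj : Φ ∘ g =ᶠ[𝓝 z] fun w => c * Φ w := eventually_of_mem (hΩ.mem_nhds hz) hcomp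
  rw [← deriv_comp z ((hΦ.differentiableAt (hΩ.mem_nhds (hgΩ hz))))
    (hg.differentiableAt (hΩ.mem_nhds hz)), hconj.deriv_eq]
  exact deriv_const_mul _ (hΦ.differentiableAt (hΩ.mem_nhds hz))

theorem deriv_ne_zero_of_comp_eq_mul (hΩ : IsOpen Ω) (hg : DifferentiableOn ℂ g Ω)
    (hΦ : DifferentiableOn ℂ Φ Ω) (hgΩ : MapsTo g Ω Ω) (hcomp : ∀ w ∈ Ω, Φ (g w) = c * Φ w)
    (hc : c ≠ 0) {z : ℂ} (hz : z ∈ Ω) (hΦz : deriv Φ z ≠ 0) :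
    deriv Φ (g z) ≠ 0 ∧ deriv g z ≠ 0 := by
  rw [← mul_ne_zero_iff, deriv_comp_mul_deriv_of_comp_eq_mul hΩ hg hΦ hgΩ hcomp hz]
  exact mul_ne_zero hc hΦz

theorem derivRatio_two_sub_of_comp_eq_mul (hΩ : IsOpen Ω) (hg : DifferentiableOn ℂ g Ω)
    (hΦ : DifferentiableOn ℂ Φ Ω) (hgΩ : MapsTo g Ω Ω) (hcomp : ∀ w ∈ Ω, Φ (g w) = c * Φ w)
    (hc : c ≠ 0) {z : ℂ} (hz : z ∈ Ω) (hΦz : deriv Φ z ≠ 0) :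
    derivRatio 2 g z - derivRatio 2 Φ z =
      -(c * deriv Φ z * (iteratedDeriv 2 Φ (g z) / deriv Φ (g z) ^ 2)) := by
  obtain ⟨hΦgz, hgz⟩ := deriv_ne_zero_of_comp_eq_mul hΩ hg hΦ hgΩ hcomp hc hz hΦz
  have hnhds := hΩ.mem_nhds hz
  -- differentiate `Φ' (g w) * g' w = c * Φ' w` at `z`
  have hsecond : iteratedDeriv 2 Φ (g z) * deriv g z * deriv g z +
      deriv Φ (g z) * iteratedDeriv 2 g z = c * iteratedDeriv 2 Φ z := by
    have hΦ'g : DifferentiableAt ℂ (deriv Φ ∘ g) z :=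
      ((hΦ.deriv hΩ).differentiableAt (hΩ.mem_nhds (hgΩ hz))).comp z
        (hg.differentiableAt hnhds)
    have hfirst : (fun w => (deriv Φ ∘ g) w * deriv g w) =ᶠ[𝓝 z] fun w => c * deriv Φ w :=
      eventually_of_mem hnhds fun w hw =>
        deriv_comp_mul_deriv_of_comp_eq_mul hΩ hg hΦ hgΩ hcomp hw
    have hderiv := deriv_fun_mul hΦ'g ((hg.deriv hΩ).differentiableAt hnhds)
    rw [hfirst.deriv_eq, deriv_const_mul _ ((hΦ.deriv hΩ).differentiableAt hnhds),
      deriv_comp z ((hΦ.deriv hΩ).differentiableAt (hΩ.mem_nhds (hgΩ hz)))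
        (hg.differentiableAt hnhds)] at hderiv
    simpa only [iteratedDeriv_succ, iteratedDeriv_zero, Function.comp_apply] using hderiv.symm
  have hfirst := deriv_comp_mul_deriv_of_comp_eq_mul hΩ hg hΦ hgΩ hcomp hz
  simp only [derivRatio]
  field_simp
  linear_combination deriv Φ z * deriv Φ (g z) * hsecond -
    (deriv Φ z * iteratedDeriv 2 Φ (g z) * deriv g z + iteratedDeriv 2 Φ z * deriv Φ (g z)) *
      hfirst

end FunctionalEquation

theorem exists_eventually_norm_derivRatio_two_sub_le {ι : Type*} {l : Filter ι} {Ω : Set ℂ}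
    (hΩ : IsOpen Ω) {g : ι → ℂ → ℂ} {Φ : ℂ → ℂ} {c : ι → ℂ}
    (hg : ∀ i, DifferentiableOn ℂ (g i) Ω) (hgΩ : ∀ i, MapsTo (g i) Ω Ω)
    (hΦ : DifferentiableOn ℂ Φ Ω) (hcomp : ∀ i, ∀ w ∈ Ω, Φ (g i w) = c i * Φ w)
    (hc : ∀ i, c i ≠ 0) {K L : Set ℂ} (hK : IsCompact K) (hKΩ : K ⊆ Ω)
    (hΦK : ∀ z ∈ K, deriv Φ z ≠ 0) (hL : IsCompact L) (hLΩ : L ⊆ Ω)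
    (hΦL : ∀ z ∈ L, deriv Φ z ≠ 0) (htrap : ∀ᶠ i in l, MapsTo (g i) K L) :
    ∃ C, ∀ᶠ i in l, ∀ z ∈ K, ‖derivRatio 2 (g i) z - derivRatio 2 Φ z‖ ≤ C * ‖c i‖ := by
  obtain ⟨BK, hBK⟩ := hK.exists_bound_of_continuousOn ((hΦ.deriv hΩ).continuousOn.mono hKΩ)
  obtain ⟨BL, hBL⟩ := hL.exists_bound_of_continuousOn
    (((hΦ.iteratedDeriv hΩ 2).continuousOn.mono hLΩ).div
      (((hΦ.deriv hΩ).continuousOn.mono hLΩ).pow 2) fun z hz => pow_ne_zero 2 (hΦL z hz))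
  refine ⟨BK * BL, ?_⟩
  filter_upwards [htrap] with i hi z hz
  rw [derivRatio_two_sub_of_comp_eq_mul hΩ (hg i) hΦ (hgΩ i) (hcomp i) (hc i) (hKΩ hz)
    (hΦK z hz), norm_neg, norm_mul, norm_mul]
  calc ‖c i‖ * ‖deriv Φ z‖ * ‖iteratedDeriv 2 Φ (g i z) / deriv Φ (g i z) ^ 2‖
      ≤ ‖c i‖ * BK * BL := by
        gcongr
        · exact mul_nonneg (norm_nonneg _) ((norm_nonneg _).trans (hBK z hz))
        · exact hBK z hz
        · exact hBL _ (hi hz)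
    _ = BK * BL * ‖c i‖ := by ring

theorem iterate_mem_biUnion_image_of_mapsTo {α : Type*} {f : α → α} {B : Set α} {p : ℕ}
    (hp : 0 < p) (hB : MapsTo f^[p] B B) {z : α} {m n : ℕ} (hz : f^[m] z ∈ B) (hmn : m ≤ n) :
    f^[n] z ∈ ⋃ j < p, f^[j] '' B := by
  obtain ⟨k, rfl⟩ := Nat.exists_eq_add_of_le hmn
  have hsplit : f^[m + k] z = f^[k % p] ((f^[p])^[k / p] (f^[m] z)) := by
    rw [← Function.iterate_mul, ← Function.iterate_add_apply, ← Function.iterate_add_apply]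
    congr 1
    have := Nat.mod_add_div k p
    omega
  rw [hsplit]
  exact mem_biUnion (Nat.mod_lt k hp) (mem_image_of_mem _ (hB.iterate _ hz))

theorem IsCompact.eventually_mapsTo_iterate {X : Type*} [TopologicalSpace X] {f : X → X}
    {B K : Set X} {p : ℕ} (hp : 0 < p) (hB : MapsTo f^[p] B B) (hK : IsCompact K)
    (hreach : ∀ z ∈ K, ∃ m, ∀ᶠ w in 𝓝 z, f^[m] w ∈ B) :
    ∀ᶠ n in atTop, MapsTo f^[n] K (⋃ j < p, f^[j] '' B) := by
  have hprod : {q : ℕ × X | f^[q.1] q.2 ∈ ⋃ j < p, f^[j] '' B} ∈ atTop ×ˢ 𝓝ˢ K := by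
    refine hK.mem_prod_nhdsSet_of_forall fun z hz => ?_
    obtain ⟨m, hm⟩ := hreach z hz
    exact mem_of_superset (prod_mem_prod (Ici_mem_atTop m) hm) fun q hq =>
      iterate_mem_biUnion_image_of_mapsTo hp hB hq.2 hq.1
  exact (Filter.Eventually.curry hprod).mono fun n hn => hn.self_of_nhdsSet

theorem exists_closedBall_subset_mapsTo_of_hasDerivAt {𝕜 : Type*} [NontriviallyNormedField 𝕜]
    {g : 𝕜 → 𝕜} {c a : 𝕜} (hg : HasDerivAt g c a) (hfix : g a = a) (hc : ‖c‖ < 1)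
    {s : Set 𝕜} (hs : s ∈ 𝓝 a) :
    ∃ r > 0, closedBall a r ⊆ s ∧ MapsTo g (closedBall a r) (closedBall a r) := by
  have hcontract : ∀ᶠ z in 𝓝 a, ‖g z - a‖ ≤ ‖z - a‖ := by
    filter_upwards [(hasDerivAt_iff_isLittleO.mp hg).bound (sub_pos.mpr hc)] with z hz
    calc ‖g z - a‖ = ‖(g z - g a - (z - a) • c) + (z - a) • c‖ := by
          rw [hfix, sub_add_cancel]
      _ ≤ (1 - ‖c‖) * ‖z - a‖ + ‖z - a‖ * ‖c‖ := by
          rw [← norm_smul]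
          exact norm_add_le_of_le hz le_rfl
      _ = ‖z - a‖ := by ring
  obtain ⟨r, hr, hball⟩ := nhds_basis_closedBall.mem_iff.mp (inter_mem hs hcontract)
  refine ⟨r, hr, fun z hz => (hball hz).1, fun z hz => ?_⟩
  have hgz := (hball hz).2
  rw [mem_closedBall, dist_eq_norm] at hz ⊢
  exact hgz.trans hz

theorem exists_isCompact_subset_eventually_mapsTo_iterate {Ω : Set ℂ} (hΩ : IsOpen Ω)
    {f : ℂ → ℂ} (hf : ContinuousOn f Ω) (hmaps : MapsTo f Ω Ω) {p : ℕ} (hp : 0 < p) {a c : ℂ}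
    (ha : a ∈ Ω) (hfix : f^[p] a = a) (hderiv : HasDerivAt f^[p] c a) (hc : ‖c‖ < 1)
    (hbasin : ∀ z ∈ Ω, ∃ j < p, Tendsto (fun n : ℕ => f^[p * n + j] z) atTop (𝓝 a))
    {V : Set ℂ} (hV : IsOpen V) (hcycle : ∀ j < p, f^[j] a ∈ V) {K : Set ℂ} (hK : IsCompact K)
    (hKΩ : K ⊆ Ω) : ∃ L, IsCompact L ∧ L ⊆ V ∧ ∀ᶠ n in atTop, MapsTo f^[n] K L := by
  have hcont : ∀ n, ∀ z ∈ Ω, ContinuousAt f^[n] z := fun n z hz =>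
    (hf.iterate hmaps n).continuousAt (hΩ.mem_nhds hz)
  have hnhds : Ω ∩ ⋂ j < p, f^[j] ⁻¹' V ∈ 𝓝 a :=
    inter_mem (hΩ.mem_nhds ha) ((biInter_mem (finite_lt_nat p)).mpr fun j hj =>
      hcont j a ha (hV.mem_nhds (hcycle j hj)))
  obtain ⟨r, hr, hball, hmapsTo⟩ :=
    exists_closedBall_subset_mapsTo_of_hasDerivAt hderiv hfix hc hnhds
  refine ⟨⋃ j < p, f^[j] '' closedBall a r, ?_, ?_, ?_⟩
  · exact (finite_lt_nat p).isCompact_biUnion fun j _ =>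
      (isCompact_closedBall a r).image_of_continuousOn
        ((hf.iterate hmaps j).mono fun z hz => (hball hz).1)
  · simp only [iUnion_subset_iff, image_subset_iff]
    exact fun j hj z hz => mem_iInter₂.mp (hball hz).2 j hj
  · refine hK.eventually_mapsTo_iterate hp hmapsTo fun z hz => ?_
    obtain ⟨j, -, htends⟩ := hbasin z (hKΩ hz)
    obtain ⟨n, hn⟩ := (htends.eventually (isOpen_ball.mem_nhds (mem_ball_self hr))).exists
    exact ⟨p * n + j, (hcont _ z (hKΩ hz)).preimage_mem_nhds
      (mem_of_superset (isOpen_ball.mem_nhds hn) ball_subset_closedBall)⟩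

theorem norm_rpow_div_eq_norm_pow {𝕜 : Type*} [NormedField 𝕜] {μ c : 𝕜} {p : ℕ}
    (hμ : μ ^ p = c) (hp : p ≠ 0) (n : ℕ) : ‖c‖ ^ ((n : ℝ) / p) = ‖μ‖ ^ n := by
  rw [← hμ, norm_pow, ← Real.rpow_natCast, ← Real.rpow_mul (norm_nonneg μ),
    mul_div_cancel₀ _ (Nat.cast_ne_zero.mpr hp), Real.rpow_natCast]

/-- Theorem B, attracting case: approximation of `(f^{∘n})^{(t)} / (f^{∘n})'` by
`Φ^{(t)} / Φ'` with error `O(|λ|^{n/p})`, where `Φ` solves the Schröder equation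
`Φ ∘ f = μ · Φ` (with `μ^p = λ`) on the attracting basin `Ω`. -/
theorem higher_deriv_ratio_approx_schroeder
    (Ω : Set ℂ) (hΩ : IsOpen Ω) (f : ℂ → ℂ)
    (hf : DifferentiableOn ℂ f Ω) (hmaps : Set.MapsTo f Ω Ω)
    (p : ℕ) (hp : 1 ≤ p) (a : ℂ) (ha : a ∈ Ω) (hfix : f^[p] a = a)
    (hmult0 : 0 < ‖deriv (f^[p]) a‖)
    (hmult1 : ‖deriv (f^[p]) a‖ < 1)
    (μ : ℂ) (hμ : μ ^ p = deriv (f^[p]) a)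
    (Φ : ℂ → ℂ) (hΦ : DifferentiableOn ℂ Φ Ω)
    (hSchroeder : ∀ z ∈ Ω, Φ (f z) = μ * Φ z)
    (hΦ' : ∀ j < p, deriv Φ (f^[j] a) ≠ 0)
    (hbasin : ∀ z ∈ Ω, ∃ j < p, Tendsto (fun n : ℕ => f^[p * n + j] z) atTop (nhds a)) :
    ∀ t : ℕ, 2 ≤ t → ∀ K : Set ℂ, K ⊆ Ω → IsCompact K →
      (∀ z ∈ K, deriv Φ z ≠ 0) →
      ∃ C > 0, ∃ N : ℕ, ∀ n ≥ N, ∀ z ∈ K,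
        deriv (f^[n]) z ≠ 0 ∧
        ‖iteratedDeriv t (f^[n]) z / deriv (f^[n]) z -
            iteratedDeriv t Φ z / deriv Φ z‖ ≤
          C * ‖deriv (f^[p]) a‖ ^ ((n : ℝ) / (p : ℝ)) := by
  intro t ht K hKΩ hK hKΦ'
  have hμ0 : μ ≠ 0 := by
    rintro rfl
    rw [zero_pow (by omega), eq_comm, ← norm_eq_zero] at hμ
    exact hmult0.ne' hμ
  have hμ1 : ‖μ‖ < 1 := by
    rwa [← pow_lt_one_iff_of_nonneg (norm_nonneg μ) (by omega : p ≠ 0), ← norm_pow, hμ]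
  have hiter := hf.iterate hmaps
  have hconj := apply_iterate_eq_pow_mul hmaps hSchroeder
  set U := Ω ∩ deriv Φ ⁻¹' {0}ᶜ
  have hU : IsOpen U :=
    (hΦ.deriv hΩ).continuousOn.isOpen_inter_preimage hΩ isOpen_compl_singleton
  have hderiv : ∀ n, ∀ z ∈ U, deriv (f^[n]) z ≠ 0 := fun n z hz =>
    (deriv_ne_zero_of_comp_eq_mul hΩ (hiter n) hΦ (hmaps.iterate n) (hconj n)
      (pow_ne_zero n hμ0) hz.1 hz.2).2
  have htwo : ∀ K' ⊆ U, IsCompact K' → ∃ C, ∀ᶠ n in atTop, ∀ z ∈ K',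
      ‖derivRatio 2 (f^[n]) z - derivRatio 2 Φ z‖ ≤ C * ‖μ ^ n‖ := by
    intro K' hK'U hK'
    obtain ⟨L, hL, hLU, htrap⟩ := exists_isCompact_subset_eventually_mapsTo_iterate hΩ
      hf.continuousOn hmaps hp ha hfix ((hiter p).differentiableAt (hΩ.mem_nhds ha)).hasDerivAt
      hmult1 hbasin hU (fun j hj => ⟨hmaps.iterate j ha, hΦ' j hj⟩) hK'
      (hK'U.trans inter_subset_left)
    exact exists_eventually_norm_derivRatio_two_sub_le hΩ hiter hmaps.iterate hΦ hconj
      (fun n => pow_ne_zero n hμ0) hK' (hK'U.trans inter_subset_left) (fun z hz => (hK'U hz).2)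
      hL (hLU.trans inter_subset_left) (fun z hz => (hLU hz).2) htrap
  obtain ⟨C, hC⟩ := exists_eventually_norm_derivRatio_sub_le hU
    (fun n => (hiter n).mono inter_subset_left) hderiv (hΦ.mono inter_subset_left)
    (fun z hz => hz.2) (fun n => norm_nonneg (μ ^ n))
    (fun n => by rw [norm_pow]; exact pow_le_one₀ (norm_nonneg μ) hμ1.le) htwo ht
    (fun z hz => ⟨hKΩ hz, hKΦ' z hz⟩) hK
  obtain ⟨N, hN⟩ := eventually_atTop.mp hC
  refine ⟨max C 1, by positivity, N, fun n hn z hz => ⟨hderiv n z ⟨hKΩ hz, hKΦ' z hz⟩, ?_⟩⟩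
  rw [norm_rpow_div_eq_norm_pow hμ (by omega), ← norm_pow]
  exact (hN n hn z hz).trans (by gcongr; exact le_max_left C 1)
end

section
/- For every s ≥ 1 and every u with 0 ≤ u ≤ s, the polynomial A_{s,u} does not involve the variable X_s, i.e. A_{s,u} ∈ ℤ[X₀,…,X_{s−1}] (its degree in X_s is 0). -/
/-- The polynomials `A_{s,u} ∈ ℤ[X₀, …, X_s]` defined by `A_{0,0} = 1`,
`A_{0,u} = 0` for `u ≠ 0`, and inductively
`A_{s,u} = A_{s-1,u-1} · X₀ + ∑_{q=0}^{s-1} (∂_{X_q} A_{s-1,u}) · X_{q+1}`,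
with the conventions `A_{s,-1} = 0` and `A_{s-1,s} = 0`. -/
noncomputable def chainRulePoly : ℕ → ℕ → MvPolynomial ℕ ℤ
  | 0, u => if u = 0 then 1 else 0
  | s + 1, u =>
      (if u = 0 then 0 else chainRulePoly s (u - 1)) * MvPolynomial.X 0 +
        ∑ q ∈ Finset.range (s + 1),
          MvPolynomial.pderiv q (chainRulePoly s u) * MvPolynomial.X (q + 1)

open MvPolynomial in
lemma aux_notMem_vars {i : ℕ} {f : MvPolynomial ℕ ℤ} (h : degreeOf i f = 0) :
    i ∉ f.vars := by
  intro hm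
  rw [MvPolynomial.mem_vars] at hm
  obtain ⟨d, hd, hid⟩ := hm
  have := MvPolynomial.degreeOf_le_iff.mp h.le d hd
  simp [Finsupp.mem_support_iff] at hid
  omega

open MvPolynomial in
lemma aux_deg_pderiv (t q : ℕ) (f : MvPolynomial ℕ ℤ) :
    degreeOf t (pderiv q f) ≤ degreeOf t f := by
  classical
  conv_lhs => rw [f.as_sum]
  rw [map_sum]
  refine (degreeOf_sum_le _ _ _).trans (Finset.sup_le fun m hm => ?_)
  rw [pderiv_monomial]
  refine degreeOf_le_iff.mpr fun d hd => ?_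
  have hd' : d = m - Finsupp.single q 1 := by
    have := support_monomial_subset hd
    simpa using this
  have h1 : d t ≤ m t := by
    subst hd'
    simp [Finsupp.tsub_apply]
  exact h1.trans (monomial_le_degreeOf t hm)

open MvPolynomial in
lemma chainRulePoly_key : ∀ (s u t : ℕ), s ≤ t →
    MvPolynomial.degreeOf t (chainRulePoly s u) = 0
  | 0, u, t, _ => by
      rw [chainRulePoly]
      split
      · simpa using degreeOf_C (1 : ℤ) t
      · exact degreeOf_zero t
  | s + 1, u, t, ht => by
      rw [chainRulePoly]
      refine Nat.le_zero.mp ((MvPolynomial.degreeOf_add_le _ _ _).trans ?_)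
      rw [max_le_iff]
      constructor
      · refine (MvPolynomial.degreeOf_mul_le _ _ _).trans ?_
        have h1 : degreeOf t (if u = 0 then 0 else chainRulePoly s (u - 1)) = 0 := by
          split
          · exact degreeOf_zero t
          · exact chainRulePoly_key s (u - 1) t (le_trans (Nat.le_succ s) ht)
        have h2 : degreeOf t (X 0 : MvPolynomial ℕ ℤ) = 0 := by
          rw [degreeOf_X, if_neg (by omega)]
        omega
      · refine (MvPolynomial.degreeOf_sum_le _ _ _).trans (Finset.sup_le fun q hq => ?_)
        rw [Finset.mem_range] at hq
        by_cases hqs : q < s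
        · refine (degreeOf_mul_le _ _ _).trans ?_
          have h1 := aux_deg_pderiv t q (chainRulePoly s u)
          rw [chainRulePoly_key s u t (by omega)] at h1
          have h2 : degreeOf t (X (q + 1) : MvPolynomial ℕ ℤ) = 0 := by
            rw [degreeOf_X, if_neg (by omega)]
          omega
        · have hq' : q = s := by omega
          rw [hq', pderiv_eq_zero_of_notMem_vars
            (aux_notMem_vars (chainRulePoly_key s u s le_rfl))]
          simp

/-- For every `s ≥ 1` and `0 ≤ u ≤ s`, the polynomial `A_{s,u}` does not involve
the variable `X_s`: its degree in `X_s` is `0`, i.e. `A_{s,u} ∈ ℤ[X₀, …, X_{s-1}]`. -/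
theorem chainRulePoly_degreeOf_last_eq_zero (s : ℕ) (hs : 1 ≤ s) (u : ℕ) (hu : u ≤ s) :
    MvPolynomial.degreeOf s (chainRulePoly s u) = 0 :=
  chainRulePoly_key s u s le_rfl
end

section
/- (Higher-order chain rule via the polynomials A_{s,u}.) Let U, V ⊆ ℂ be open, let h : ℂ → ℂ be analytic on U with h(U) ⊆ V, and let g : ℂ → ℂ be analytic on V. Then for every integer s ≥ 0 and every z ∈ U, the s-th derivative of the composition g'∘h satisfies (g'∘h)^{(s)}(z) = Σ_{u=0}^{s} g^{(u+1)}(h(z)) · A_{s,u}(h'(z), h''(z), …, h^{(s)}(z)), where A_{s,u} is evaluated by substituting X_q ↦ h^{(q+1)}(z) for 0 ≤ q ≤ s−1 (and A_{0,0} evaluates to 1). -/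
open Finset MvPolynomial

namespace MvPolynomial

variable {σ R : Type*} [CommSemiring R]

theorem pderiv_mem_supported {s : Set σ} {p : MvPolynomial σ R} (i : σ)
    (hp : p ∈ supported R s) : pderiv i p ∈ supported R s := by
  classical
  rw [supported_eq_adjoin_X] at hp ⊢
  induction hp using Algebra.adjoin_induction with
  | mem x hx =>
    obtain ⟨j, -, rfl⟩ := hx
    rw [pderiv_X, Pi.single_apply]
    split_ifs
    · exact one_mem _
    · exact zero_mem _
  | algebraMap r => simp
  | add p q _ _ hp hq => rw [map_add]; exact add_mem hp hq
  | mul p q hp' hq' hp hq =>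
    rw [pderiv_mul]
    exact add_mem (mul_mem hp hq') (mul_mem hp' hq)

variable {𝕜 : Type*} [NontriviallyNormedField 𝕜] [Algebra R 𝕜]

theorem hasDerivAt_aeval {S : Finset σ} {p : MvPolynomial σ R} (hp : p ∈ supported R (S : Set σ))
    {f : σ → 𝕜 → 𝕜} {f' : σ → 𝕜} {z : 𝕜} (hf : ∀ i ∈ S, HasDerivAt (f i) (f' i) z) :
    HasDerivAt (fun w => aeval (fun i => f i w) p)
      (∑ i ∈ S, aeval (fun i => f i z) (pderiv i p) * f' i) z := by
  classical
  rw [supported_eq_adjoin_X] at hp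
  induction hp using Algebra.adjoin_induction with
  | mem x hx =>
    obtain ⟨j, hj, rfl⟩ := hx
    simpa [pderiv_X, Pi.single_apply, Finset.mem_coe.1 hj] using hf j hj
  | algebraMap r => simpa using hasDerivAt_const z (algebraMap R 𝕜 r)
  | add p q _ _ hp hq =>
    simpa only [map_add, add_mul, sum_add_distrib] using hp.fun_add hq
  | mul p q _ _ hp hq =>
    simp only [map_mul]
    refine (hp.fun_mul hq).congr_deriv ?_
    simp only [pderiv_mul, map_add, map_mul, add_mul, sum_add_distrib, sum_mul, mul_sum]
    congr 1 <;> exact sum_congr rfl fun i _ => by ring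

end MvPolynomial

theorem AnalyticAt.hasDerivAt_iteratedDeriv {𝕜 F : Type*} [NontriviallyNormedField 𝕜]
    [NormedAddCommGroup F] [NormedSpace 𝕜 F] [CompleteSpace F] {f : 𝕜 → F} {x : 𝕜}
    (hf : AnalyticAt 𝕜 f x) (n : ℕ) :
    HasDerivAt (iteratedDeriv n f) (iteratedDeriv (n + 1) f x) x := by
  rw [iteratedDeriv_succ, iteratedDeriv_eq_iterate]
  exact (hf.iterated_deriv n).differentiableAt.hasDerivAt

theorem chainRulePoly_mem_supported (s u : ℕ) :
    chainRulePoly s u ∈ supported ℤ (Set.Iio (s + 1)) := by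
  induction s generalizing u with
  | zero => simp [chainRulePoly, apply_ite]
  | succ s ih =>
    have hmono := supported_mono (R := ℤ) (Set.Iio_subset_Iio (Nat.le_succ (s + 1)))
    rw [chainRulePoly]
    refine add_mem (mul_mem ?_ (X_mem_supported.2 (by simp))) (sum_mem fun q hq => ?_)
    · split_ifs
      · exact zero_mem _
      · exact hmono (ih _)
    · refine mul_mem (hmono (pderiv_mem_supported q (ih u))) (X_mem_supported.2 ?_)
      simpa using hq

theorem chainRulePoly_eq_zero_of_lt {s u : ℕ} (h : s < u) : chainRulePoly s u = 0 := by
  induction s generalizing u with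
  | zero => simp [chainRulePoly, h.ne']
  | succ s ih =>
    rw [chainRulePoly, if_neg (by omega), ih (by omega), ih (by omega)]
    simp

theorem sum_mul_aeval_chainRulePoly_succ {A : Type*} [CommRing A] (c x : ℕ → A) (s : ℕ) :
    ∑ u ∈ range (s + 2), c u * aeval x (chainRulePoly (s + 1) u) =
      ∑ u ∈ range (s + 1), (c (u + 1) * x 0 * aeval x (chainRulePoly s u) +
        c u * ∑ q ∈ range (s + 1), aeval x (pderiv q (chainRulePoly s u)) * x (q + 1)) := by
  simp only [chainRulePoly, map_add, map_mul, map_sum, aeval_X, apply_ite (aeval x), map_zero,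
    mul_add, sum_add_distrib]
  congr 1
  · rw [sum_range_succ']
    simp only [if_pos, if_neg (Nat.succ_ne_zero _), Nat.add_sub_cancel, zero_mul, mul_zero,
      add_zero]
    exact sum_congr rfl fun _ _ => by ring
  · rw [sum_range_succ, chainRulePoly_eq_zero_of_lt (Nat.lt_succ_self s)]
    simp

/-- Higher-order chain rule for `g' ∘ h` via the polynomials `A_{s,u}`:
`(g' ∘ h)^{(s)}(z) = ∑_{u=0}^{s} g^{(u+1)}(h z) · A_{s,u}(h'(z), …, h^{(s)}(z))`,
where `X_q ↦ h^{(q+1)}(z)`. -/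
theorem iteratedDeriv_deriv_comp_eq_sum_chainRulePoly
    (U V : Set ℂ) (hU : IsOpen U) (hV : IsOpen V)
    (h g : ℂ → ℂ) (hh : DifferentiableOn ℂ h U) (hmaps : Set.MapsTo h U V)
    (hg : DifferentiableOn ℂ g V) :
    ∀ s : ℕ, ∀ z ∈ U,
      iteratedDeriv s (fun w => deriv g (h w)) z =
        ∑ u ∈ Finset.range (s + 1),
          iteratedDeriv (u + 1) g (h z) *
            MvPolynomial.aeval (fun q : ℕ => iteratedDeriv (q + 1) h z)
              (chainRulePoly s u) := by
  intro s
  induction s with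
  | zero => intro z _; simp [chainRulePoly]
  | succ s ih =>
    intro z hz
    have hh_an := hh.analyticAt (hU.mem_nhds hz)
    have hg_an := hg.analyticAt (hV.mem_nhds (hmaps hz))
    have hh' : HasDerivAt h (iteratedDeriv 1 h z) z := by
      simpa using hh_an.hasDerivAt_iteratedDeriv 0
    have hRHS := HasDerivAt.fun_sum (u := range (s + 1)) fun u _ =>
      ((hg_an.hasDerivAt_iteratedDeriv (u + 1)).comp z hh').mul
        (hasDerivAt_aeval (S := range (s + 1))
          (by simpa using chainRulePoly_mem_supported s u)
          fun q _ => hh_an.hasDerivAt_iteratedDeriv (q + 1))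
    rw [iteratedDeriv_succ,
      (Filter.eventuallyEq_of_mem (hU.mem_nhds hz) ih).deriv_eq,
      sum_mul_aeval_chainRulePoly_succ]
    exact hRHS.deriv
end

section
/- Let Ω ⊆ ℂ be open, f : ℂ → ℂ analytic on Ω with f(Ω) ⊆ Ω, let p ≥ 1 and a ∈ Ω with f^{∘p}(a) = a, and let μ ∈ ℂ \ {0} and Φ : ℂ → ℂ be analytic on Ω with Φ(f(z)) = μ·Φ(z) on Ω and Φ'(f^{∘j}(a)) ≠ 0 for every 0 ≤ j < p. Assume that for every z ∈ Ω there is 0 ≤ j < p with f^{∘(pn+j)}(z) → a as n → ∞. Then the zero set of Φ' in Ω is exactly the union of the backward orbits of the critical points of f in Ω: {z ∈ Ω : Φ'(z) = 0} = ⋃_{n≥0} {z ∈ Ω : f'(f^{∘n}(z)) = 0}. -/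
open Filter Topology Set

/-- For a solution `Φ` of the Schröder equation `Φ ∘ f = μ·Φ` (`μ ≠ 0`) on the
basin `Ω` of an attracting cycle, the zero set of `Φ'` in `Ω` is exactly the
union of the backward orbits of the critical points of `f` in `Ω`. -/
theorem zero_set_deriv_schroeder_solution
    (Ω : Set ℂ) (hΩ : IsOpen Ω) (f : ℂ → ℂ)
    (hf : DifferentiableOn ℂ f Ω) (hmaps : Set.MapsTo f Ω Ω)
    (p : ℕ) (hp : 1 ≤ p) (a : ℂ) (ha : a ∈ Ω) (hfix : f^[p] a = a)
    (μ : ℂ) (hμ : μ ≠ 0)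
    (Φ : ℂ → ℂ) (hΦ : DifferentiableOn ℂ Φ Ω)
    (hSchroeder : ∀ z ∈ Ω, Φ (f z) = μ * Φ z)
    (hΦ' : ∀ j < p, deriv Φ (f^[j] a) ≠ 0)
    (hbasin : ∀ z ∈ Ω, ∃ j < p, Tendsto (fun n : ℕ => f^[p * n + j] z) atTop (nhds a)) :
    {z : ℂ | z ∈ Ω ∧ deriv Φ z = 0} =
      ⋃ n : ℕ, {z : ℂ | z ∈ Ω ∧ deriv f (f^[n] z) = 0} := by
  -- iterates stay in Ω
  have hiter : ∀ (n : ℕ) (z : ℂ), z ∈ Ω → f^[n] z ∈ Ω := fun n z hz =>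
    Set.MapsTo.iterate hmaps n hz
  -- differentiated Schröder equation
  have hchain : ∀ z ∈ Ω, deriv Φ (f z) * deriv f z = μ * deriv Φ z := by
    intro z hz
    have hfz : DifferentiableAt ℂ f z := hf.differentiableAt (hΩ.mem_nhds hz)
    have hΦfz : DifferentiableAt ℂ Φ (f z) :=
      hΦ.differentiableAt (hΩ.mem_nhds (hmaps hz))
    have hΦz : DifferentiableAt ℂ Φ z := hΦ.differentiableAt (hΩ.mem_nhds hz)
    have heq : (fun w => Φ (f w)) =ᶠ[nhds z] fun w => μ * Φ w := by
      filter_upwards [hΩ.mem_nhds hz] with w hw using hSchroeder w hw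
    have h1 : deriv (fun w => Φ (f w)) z = deriv Φ (f z) * deriv f z :=
      deriv_comp z hΦfz hfz
    have h2 : deriv (fun w => μ * Φ w) z = μ * deriv Φ z := by
      simp [deriv_const_mul μ hΦz]
    rw [← h1, heq.deriv_eq, h2]
  -- iterated version
  have hkey : ∀ (n : ℕ) (z : ℂ), z ∈ Ω →
      μ ^ n * deriv Φ z = deriv Φ (f^[n] z) * ∏ k ∈ Finset.range n, deriv f (f^[k] z) := by
    intro n
    induction n with
    | zero => intro z hz; simp
    | succ n ih =>
      intro z hz
      rw [Function.iterate_succ_apply', Finset.prod_range_succ, pow_succ]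
      have := hchain (f^[n] z) (hiter n z hz)
      calc μ ^ n * μ * deriv Φ z = μ * (μ ^ n * deriv Φ z) := by ring
        _ = μ * (deriv Φ (f^[n] z) * ∏ k ∈ Finset.range n, deriv f (f^[k] z)) := by
            rw [ih z hz]
        _ = (μ * deriv Φ (f^[n] z)) * ∏ k ∈ Finset.range n, deriv f (f^[k] z) := by ring
        _ = (deriv Φ (f (f^[n] z)) * deriv f (f^[n] z)) *
              ∏ k ∈ Finset.range n, deriv f (f^[k] z) := by rw [this]
        _ = _ := by ring
  ext z
  simp only [Set.mem_setOf_eq, Set.mem_iUnion]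
  constructor
  · rintro ⟨hz, hdz⟩
    by_contra hcon
    push_neg at hcon
    have hne : ∀ n : ℕ, deriv f (f^[n] z) ≠ 0 := fun n => hcon n hz
    -- then deriv Φ vanishes along the whole orbit
    have horb : ∀ n : ℕ, deriv Φ (f^[n] z) = 0 := by
      intro n
      have := hkey n z hz
      rw [hdz, mul_zero] at this
      have hprod : (∏ k ∈ Finset.range n, deriv f (f^[k] z)) ≠ 0 :=
        Finset.prod_ne_zero_iff.2 fun k _ => hne k
      exact (mul_eq_zero.1 this.symm).resolve_right hprod
    obtain ⟨j, hj, htend⟩ := hbasin z hz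
    -- continuity of deriv Φ at a
    have hcont : ContinuousAt (deriv Φ) a :=
      (((hΦ.analyticOnNhd hΩ).deriv) a ha).continuousAt
    have htend2 : Tendsto (fun n : ℕ => deriv Φ (f^[p * n + j] z)) atTop (nhds (deriv Φ a)) :=
      hcont.tendsto.comp htend
    have : deriv Φ a = 0 :=
      tendsto_nhds_unique htend2 (by simpa [horb] using tendsto_const_nhds)
    have h0 : deriv Φ (f^[0] a) ≠ 0 := hΦ' 0 hp
    simp only [Function.iterate_zero_apply] at h0
    exact h0 this
  · rintro ⟨n, hz, hdn⟩
    refine ⟨hz, ?_⟩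
    have := hkey (n + 1) z hz
    rw [Finset.prod_range_succ, hdn, mul_zero, mul_zero] at this
    exact (mul_eq_zero.1 this).resolve_left (pow_ne_zero _ hμ)
end

section
/- Let f ∈ ℂ[z] be a polynomial of degree d ≥ 2. Then the sequence of functions g_n(z) := d^{-n} log max{1, |f^{∘n}(z)|} converges uniformly on ℂ to a continuous function g_f : ℂ → ℝ, and moreover there is a constant C > 0 such that sup_{z ∈ ℂ} |g_f(z) − d^{-n} log max{1, |f^{∘n}(z)|}| ≤ C·d^{-n} for every n ≥ 1. -/
/-!
Write `φ w = log max 1 ‖w‖`. Since `f w = w ^ d · (reverse f) (w⁻¹)`, the continuous function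
`φ ∘ f - d · φ` tends to `log ‖leadingCoeff f‖` at infinity, so it is bounded by some `C`.
Hence consecutive terms of `d⁻ⁿ φ (f^[n] z)` differ by at most `C d⁻ⁿ⁻¹`, uniformly in `z`,
and the sequence converges uniformly with tail bound `C / (d - 1) · d⁻ⁿ`.
-/

open Filter Topology Bornology Polynomial

section RenormalizedIterates

variable {X : Type*} {T : X → X} {φ : X → ℝ} {d C : ℝ}

theorem abs_inv_pow_succ_mul_iterate_sub_le (hd : 0 < d)
    (hφ : ∀ x, |φ (T x) - d * φ x| ≤ C) (n : ℕ) (x : X) :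
    |(d ^ (n + 1))⁻¹ * φ (T^[n + 1] x) - (d ^ n)⁻¹ * φ (T^[n] x)| ≤ C / d * d⁻¹ ^ n := by
  have hdn : (d ^ (n + 1))⁻¹ * d = (d ^ n)⁻¹ := by rw [pow_succ]; field_simp
  calc |(d ^ (n + 1))⁻¹ * φ (T^[n + 1] x) - (d ^ n)⁻¹ * φ (T^[n] x)|
      = |(d ^ (n + 1))⁻¹ * (φ (T (T^[n] x)) - d * φ (T^[n] x))| := by
        rw [Function.iterate_succ_apply', mul_sub, ← mul_assoc, hdn]
    _ = (d ^ (n + 1))⁻¹ * |φ (T (T^[n] x)) - d * φ (T^[n] x)| := by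
        rw [abs_mul, abs_of_pos (by positivity)]
    _ ≤ (d ^ (n + 1))⁻¹ * C := by gcongr; exact hφ _
    _ = C / d * d⁻¹ ^ n := by rw [pow_succ, inv_pow]; field_simp

theorem tendstoUniformly_of_dist_le {ι Y α : Type*} [PseudoMetricSpace α] {l : Filter ι}
    {F : ι → Y → α} {g : Y → α} {b : ι → ℝ} (hb : Tendsto b l (𝓝 0))
    (hF : ∀ i y, dist (g y) (F i y) ≤ b i) :
    TendstoUniformly F g l :=
  Metric.tendstoUniformly_iff.2 fun _ hε ↦ (hb.eventually (gt_mem_nhds hε)).mono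
    fun i hi y ↦ (hF i y).trans_lt hi

theorem exists_tendstoUniformly_inv_pow_mul_iterate (hd : 1 < d)
    (hφ : ∀ x, |φ (T x) - d * φ x| ≤ C) :
    ∃ g : X → ℝ, TendstoUniformly (fun n x ↦ (d ^ n)⁻¹ * φ (T^[n] x)) g atTop ∧
      ∀ n x, |g x - (d ^ n)⁻¹ * φ (T^[n] x)| ≤ C / (d - 1) * (d ^ n)⁻¹ := by
  have hd₀ : 0 < d := one_pos.trans hd
  have hr : d⁻¹ < 1 := inv_lt_one_of_one_lt₀ hd
  have hstep (x : X) (n : ℕ) :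
      dist ((d ^ n)⁻¹ * φ (T^[n] x)) ((d ^ (n + 1))⁻¹ * φ (T^[n + 1] x)) ≤ C / d * d⁻¹ ^ n := by
    rw [dist_comm, Real.dist_eq]
    exact abs_inv_pow_succ_mul_iterate_sub_le hd₀ hφ n x
  choose g hg using fun x ↦
    cauchySeq_tendsto_of_complete (cauchySeq_of_le_geometric _ _ hr (hstep x))
  have herr (n : ℕ) (x : X) : |g x - (d ^ n)⁻¹ * φ (T^[n] x)| ≤ C / (d - 1) * (d ^ n)⁻¹ := by
    rw [abs_sub_comm, ← Real.dist_eq]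
    convert dist_le_of_le_geometric_of_tendsto _ _ hr (hstep x) (hg x) n using 1
    rw [inv_pow]
    field_simp
  refine ⟨g, tendstoUniformly_of_dist_le ?_ fun n x ↦ (Real.dist_eq _ _).trans_le (herr n x), herr⟩
  simpa [inv_pow] using
    (tendsto_pow_atTop_nhds_zero_of_lt_one (by positivity) hr).const_mul (C / (d - 1))

end RenormalizedIterates

theorem exists_abs_le_of_tendsto_cobounded {E : Type*} [SeminormedAddCommGroup E] [ProperSpace E]
    {h : E → ℝ} {L : ℝ} (hc : Continuous h) (hL : Tendsto h (cobounded E) (𝓝 L)) :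
    ∃ C > 0, ∀ x, |h x| ≤ C := by
  rw [Metric.cobounded_eq_cocompact] at hL
  obtain ⟨C, hC, hbound⟩ := (hc.isBounded_range_iff_isBigO.2 (hL.isBigO_one ℝ)).exists_pos_norm_le
  exact ⟨C, hC, fun x ↦ hbound _ ⟨x, rfl⟩⟩

namespace Polynomial

variable {𝕜 : Type*} [NormedField 𝕜]

theorem eval_eq_eval_reverse_inv_mul_pow (f : 𝕜[X]) {w : 𝕜} (hw : w ≠ 0) :
    f.eval w = f.reverse.eval w⁻¹ * w ^ f.natDegree := by
  let _ := invertibleOfNonzero hw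
  have := eval₂_reverse_mul_pow (RingHom.id 𝕜) w f
  rw [invOf_eq_inv] at this
  exact this.symm

theorem tendsto_log_max_one_norm_eval_sub_cobounded (f : 𝕜[X]) (hf : 0 < f.natDegree) :
    Tendsto (fun w ↦ Real.log (max 1 ‖f.eval w‖) - f.natDegree * Real.log (max 1 ‖w‖))
      (cobounded 𝕜) (𝓝 (Real.log ‖f.leadingCoeff‖)) := by
  have ha : f.leadingCoeff ≠ 0 := leadingCoeff_ne_zero.2 (ne_zero_of_natDegree_gt hf)
  have hrev : Tendsto (fun w ↦ f.reverse.eval w⁻¹) (cobounded 𝕜) (𝓝 f.leadingCoeff) := by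
    have := (f.reverse.continuous.tendsto 0).comp tendsto_inv₀_cobounded
    rwa [← coeff_zero_eq_eval_zero, coeff_zero_reverse] at this
  refine ((Real.continuousAt_log (norm_ne_zero_iff.2 ha)).tendsto.comp hrev.norm).congr' ?_
  have hw : ∀ᶠ w in cobounded 𝕜, 1 ≤ ‖w‖ := tendsto_norm_cobounded_atTop.eventually_ge_atTop 1
  have hfw : ∀ᶠ w in cobounded 𝕜, 1 ≤ ‖f.eval w‖ :=
    (f.tendsto_norm_atTop (natDegree_pos_iff_degree_pos.1 hf)
      tendsto_norm_cobounded_atTop).eventually_ge_atTop 1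
  filter_upwards [hw, hfw] with w hw hfw
  have hw₀ : w ≠ 0 := norm_pos_iff.1 (one_pos.trans_le hw)
  have hrev₀ : f.reverse.eval w⁻¹ ≠ 0 := by
    refine left_ne_zero_of_mul (b := w ^ f.natDegree) ?_
    rw [← eval_eq_eval_reverse_inv_mul_pow f hw₀]
    exact norm_pos_iff.1 (one_pos.trans_le hfw)
  rw [max_eq_right hw, max_eq_right hfw, eval_eq_eval_reverse_inv_mul_pow f hw₀, norm_mul,
    norm_pow, Real.log_mul (norm_ne_zero_iff.2 hrev₀) (by positivity), Real.log_pow,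
    add_sub_cancel_right, Function.comp_apply]

theorem exists_abs_log_max_one_norm_eval_sub_le [ProperSpace 𝕜] (f : 𝕜[X]) (hf : 0 < f.natDegree) :
    ∃ C > 0, ∀ w, |Real.log (max 1 ‖f.eval w‖) - f.natDegree * Real.log (max 1 ‖w‖)| ≤ C := by
  refine exists_abs_le_of_tendsto_cobounded ?_ (f.tendsto_log_max_one_norm_eval_sub_cobounded hf)
  have hlog {g : 𝕜 → 𝕜} (hg : Continuous g) : Continuous fun w ↦ Real.log (max 1 ‖g w‖) :=
    (continuous_const.max hg.norm).log fun _ ↦ (one_pos.trans_le (le_max_left _ _)).ne'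
  exact (hlog f.continuous).sub (continuous_const.mul (hlog continuous_id))

end Polynomial

/-- For a polynomial `f` of degree `d ≥ 2`, the functions
`z ↦ d^{-n} log max{1, |f^{∘n}(z)|}` converge uniformly on `ℂ` to a continuous
function `g_f` (the Green function of the filled-in Julia set with pole at `∞`),
with uniform error at most `C · d^{-n}`. -/
theorem green_function_uniform_limit
    (f : Polynomial ℂ) (d : ℕ) (hd : 2 ≤ d) (hdeg : f.natDegree = d) :
    ∃ g : ℂ → ℝ, Continuous g ∧
      TendstoUniformly
        (fun (n : ℕ) (z : ℂ) =>
          ((d : ℝ) ^ n)⁻¹ * Real.log (max 1 ‖(fun w => f.eval w)^[n] z‖))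
        g atTop ∧
      ∃ C > 0, ∀ n : ℕ, 1 ≤ n → ∀ z : ℂ,
        |g z -
            ((d : ℝ) ^ n)⁻¹ * Real.log (max 1 ‖(fun w => f.eval w)^[n] z‖)| ≤
          C * ((d : ℝ) ^ n)⁻¹ := by
  have hd₁ : (1 : ℝ) < d := by exact_mod_cast hd
  obtain ⟨C, hC, hfC⟩ := f.exists_abs_log_max_one_norm_eval_sub_le (by omega)
  rw [hdeg] at hfC
  obtain ⟨g, hg, herr⟩ := exists_tendstoUniformly_inv_pow_mul_iterate
    (T := fun w ↦ f.eval w) (φ := fun w ↦ Real.log (max 1 ‖w‖)) hd₁ hfC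
  refine ⟨g, hg.continuous (.of_forall fun n ↦ ?_), hg, C / (d - 1), div_pos hC (sub_pos.2 hd₁),
    fun n _ z ↦ herr n z⟩
  exact continuous_const.mul <| (continuous_const.max (f.continuous.iterate n).norm).log
    fun _ ↦ (one_pos.trans_le (le_max_left _ _)).ne'
end
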